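/- Let I_1,…,I_k be finite sets and Φ ⊆ Ψ ⊆ I_1×⋯×I_k. If Ψ ⊵ Φ (Φ is a combinatorial degeneration of Ψ), then Q̃(Ψ) ≥ Q̃(Φ), i.e., the asymptotic subrank of Ψ is at least the asymptotic subrank of Φ. -/

import Mathlib

open scoped BigOperators
open scoped Classical
open scoped ComplexOrder

noncomputable section

namespace CVZ

variable {k : ℕ}

/-- A concrete `k`-tensor over `F` with index types `I i`: the coefficient array
(in the standard bases) of a multilinear map `V₁ × ⋯ × V_k → F` with `dim V_i = |I i|`. -/
abbrev Tensor (F : Type*) (I : Fin k → Type*) : Type _ := (∀ i, I i) → F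

section Basic

variable {F : Type*} [Field F] {I J : Fin k → Type*}
  [∀ i, Fintype (I i)] [∀ i, DecidableEq (I i)]
  [∀ i, Fintype (J i)] [∀ i, DecidableEq (J i)]

/-- Coefficient array of the restriction `f ∘ (A₁, …, A_k)`, where `A_i : W_i → V_i`
is given by the matrix `A i`. -/
def restrictBy (A : ∀ i, Matrix (I i) (J i) F) (t : Tensor F I) : Tensor F J :=
  fun β => ∑ α : ∀ i, I i, (∏ i, A i (α i) (β i)) * t α

/-- `t` restricts to `s`. -/
def Restricts (t : Tensor F I) (s : Tensor F J) : Prop :=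
  ∃ A : ∀ i, Matrix (I i) (J i) F, restrictBy A t = s

/-- A choice of bases of the spaces `V_i`, encoded as a tuple of invertible matrices. -/
def IsBasisTuple (B : ∀ i, Matrix (I i) (I i) F) : Prop := ∀ i, IsUnit (B i)

/-- Support of a tensor (with respect to the standard bases). -/
def supp (t : Tensor F I) : Set (∀ i, I i) := {α | t α ≠ 0}

end Basic

section Entropy

/-- A probability distribution on the finite set `X`. -/
def IsProbDist {X : Type*} [Fintype X] (P : X → ℝ) : Prop :=
  (∀ x, 0 ≤ P x) ∧ ∑ x, P x = 1

/-- Base-2 Shannon entropy. -/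
def H2 {X : Type*} [Fintype X] (P : X → ℝ) : ℝ :=
  ∑ x, -(P x * Real.logb 2 (P x))

variable {I : Fin k → Type*} [∀ i, Fintype (I i)] [∀ i, DecidableEq (I i)]

/-- The `i`-th marginal of a distribution on a product set. -/
def marg (P : (∀ i, I i) → ℝ) (i : Fin k) : I i → ℝ :=
  fun a => ∑ α : ∀ i, I i, if α i = a then P α else 0

/-- `H_θ(P)`, the `θ`-weighted average of the marginal entropies. -/
def Hw (θ : Fin k → ℝ) (P : (∀ i, I i) → ℝ) : ℝ :=
  ∑ i, θ i * H2 (marg P i)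

/-- `H_θ(Φ)`, the supremum of `H_θ(P)` over distributions `P` supported on `Φ`. -/
def HwSet (θ : Fin k → ℝ) (Φ : Set (∀ i, I i)) : ℝ :=
  sSup {h | ∃ P : (∀ i, I i) → ℝ, IsProbDist P ∧ (∀ α, P α ≠ 0 → α ∈ Φ) ∧ h = Hw θ P}

/-- Maximal points of a subset of the product order. -/
def maxPoints [∀ i, LinearOrder (I i)] (Φ : Set (∀ i, I i)) : Set (∀ i, I i) :=
  {α | α ∈ Φ ∧ ∀ β ∈ Φ, ¬ α < β}

end Entropy

section SuppFunc

variable {F : Type*} [Field F] {I : Fin k → Type*} [∀ i, Fintype (I i)] [∀ i, DecidableEq (I i)]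

/-- The logarithmic Strassen upper support functional `ρ^θ`. -/
def rhoUpper (θ : Fin k → ℝ) (t : Tensor F I) : ℝ :=
  sInf {h | ∃ B : ∀ i, Matrix (I i) (I i) F, IsBasisTuple B ∧
    h = HwSet θ (supp (restrictBy B t))}

/-- The Strassen upper support functional `ζ^θ`. -/
def zetaUpper (θ : Fin k → ℝ) (t : Tensor F I) : ℝ :=
  if t = 0 then 0 else (2 : ℝ) ^ rhoUpper θ t

/-- The logarithmic Strassen lower support functional `ρ_θ`. -/
def rhoLower [∀ i, LinearOrder (I i)] (θ : Fin k → ℝ) (t : Tensor F I) : ℝ :=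
  sSup {h | ∃ B : ∀ i, Matrix (I i) (I i) F, IsBasisTuple B ∧
    h = HwSet θ (maxPoints (supp (restrictBy B t)))}

/-- The Strassen lower support functional `ζ_θ`. -/
def zetaLower [∀ i, LinearOrder (I i)] (θ : Fin k → ℝ) (t : Tensor F I) : ℝ :=
  if t = 0 then 0 else (2 : ℝ) ^ rhoLower θ t

/-- The instability of a tensor. -/
def instab (t : Tensor F I) : ℝ :=
  sSup {ε : ℝ | 0 ≤ ε ∧ ∃ B : ∀ i, Matrix (I i) (I i) F, IsBasisTuple B ∧
    ∃ w : ∀ i, I i → ℝ, (∀ i x, 0 ≤ w i x) ∧ (∀ i, ∃ x, w i x ≠ 0) ∧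
      ∀ a ∈ supp (restrictBy B t), ∑ i, w i (a i) ≤
        ∑ i, ((∑ x : I i, w i x) / (Fintype.card (I i) : ℝ) - ε * ⨆ x : I i, w i x)}

end SuppFunc

section Ops

variable {F : Type*} [Field F]

/-- The unit tensor `⟨r⟩`. -/
def unitTensor (F : Type*) [Field F] (k r : ℕ) : Tensor F (fun _ : Fin k => Fin r) :=
  fun α => if ∀ i j : Fin k, α i = α j then 1 else 0

variable {n m : Fin k → ℕ}

/-- Direct sum of two tensors, with the concatenated (naturally ordered) bases. -/
def dirSumFin (s : Tensor F fun i => Fin (n i)) (t : Tensor F fun i => Fin (m i)) :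
    Tensor F fun i => Fin (n i + m i) :=
  fun α =>
    (if h : ∀ i, (α i : ℕ) < n i then s (fun i => ⟨(α i : ℕ), h i⟩) else 0) +
    (if h : ∀ i, n i ≤ (α i : ℕ) then
      t (fun i => ⟨(α i : ℕ) - n i, by have h1 := (α i).isLt; have h2 := h i; omega⟩) else 0)

/-- Tensor (Kronecker) product of two tensors, with the product bases ordered naturally. -/
def tensMulFin (s : Tensor F fun i => Fin (n i)) (t : Tensor F fun i => Fin (m i)) :
    Tensor F fun i => Fin (n i * m i) :=
  fun α =>
    s (fun i => ⟨(α i : ℕ) / m i, by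
      have h := (α i).isLt
      exact Nat.div_lt_of_lt_mul (lt_of_lt_of_le h (Nat.mul_comm (n i) (m i)).le)⟩) *
    t (fun i => ⟨(α i : ℕ) % m i, by
      have h := (α i).isLt
      have hpos : 0 < n i * m i := Nat.lt_of_le_of_lt (Nat.zero_le _) h
      have hm : 0 < m i := by
        rcases Nat.eq_zero_or_pos (m i) with h0 | h0
        · simp [h0] at hpos
        · exact h0
      exact Nat.mod_lt _ hm⟩)

/-- The `N`-th tensor power of a tensor (grouping the legs into `k` groups). -/
def tpow {I : Fin k → Type*} (t : Tensor F I) (N : ℕ) : Tensor F fun i => Fin N → I i :=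
  fun α => ∏ j : Fin N, t fun i => α i j

end Ops

section Subrank

variable {F : Type*} [Field F] {I : Fin k → Type*} [∀ i, Fintype (I i)] [∀ i, DecidableEq (I i)]

/-- The subrank `Q(t)` of a tensor: the largest `r` with `⟨r⟩ ≤ t`. -/
def Qtensor (t : Tensor F I) : ℕ :=
  sSup {r : ℕ | Restricts t (unitTensor F k r)}

/-- A slice: a tensor of the form `v ⊗ w` with `v` in the `j`-th leg. -/
def IsSlice (s : Tensor F I) : Prop :=
  ∃ (j : Fin k) (v : I j → F) (w : (∀ i : {i : Fin k // i ≠ j}, I i.1) → F),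
    ∀ α, s α = v (α j) * w (fun i => α i.1)

/-- The slice rank of a tensor. -/
def sliceRank (t : Tensor F I) : ℕ :=
  sInf {r : ℕ | ∃ c : Fin r → Tensor F I, (∀ a, IsSlice (c a)) ∧ t = ∑ a, c a}

end Subrank

section Combinatorial

variable {I : Fin k → Type*}

/-- A diagonal: any two distinct elements differ in all coordinates. -/
def IsDiagonal (D : Set (∀ i, I i)) : Prop :=
  ∀ a ∈ D, ∀ b ∈ D, a ≠ b → ∀ i, a i ≠ b i

/-- The `i`-th projection of a set of tuples. -/
def projSet (D : Set (∀ i, I i)) (i : Fin k) : Set (I i) := {x | ∃ a ∈ D, a i = x}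

/-- A free diagonal in `Φ`: a diagonal `D` with `D = Φ ∩ (D₁ × ⋯ × D_k)`. -/
def IsFreeDiagonal (D Φ : Set (∀ i, I i)) : Prop :=
  IsDiagonal D ∧ D = Φ ∩ {a | ∀ i, a i ∈ projSet D i}

/-- The (combinatorial) subrank of a set: the maximal size of a free diagonal. -/
def Qset (Φ : Set (∀ i, I i)) : ℕ :=
  sSup {r : ℕ | ∃ D : Set (∀ i, I i), IsFreeDiagonal D Φ ∧ D.ncard = r}

/-- The `N`-fold coordinatewise power of a set of tuples. -/
def setPow (Φ : Set (∀ i, I i)) (N : ℕ) : Set (∀ i, Fin N → I i) :=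
  {α | ∀ j : Fin N, (fun i => α i j) ∈ Φ}

/-- A tight set. -/
def TightSet (Φ : Set (∀ i, I i)) : Prop :=
  ∃ u : ∀ i, I i → ℤ, (∀ i, Function.Injective (u i)) ∧ ∀ α ∈ Φ, ∑ i, u i (α i) = 0

/-- `Φ` is a combinatorial degeneration of `Ψ` (written `Ψ ⊵ Φ`). -/
def CombDegen (Ψ Φ : Set (∀ i, I i)) : Prop :=
  Φ ⊆ Ψ ∧ ∃ u : ∀ i, I i → ℤ,
    (∀ α ∈ Φ, ∑ i, u i (α i) = 0) ∧ ∀ α ∈ Ψ, α ∉ Φ → 0 < ∑ i, u i (α i)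

end Combinatorial

/-- A tight tensor: some basis tuple gives a tight support. -/
def TightTensor {F : Type*} [Field F] {I : Fin k → Type*} [∀ i, Fintype (I i)]
    [∀ i, DecidableEq (I i)] (t : Tensor F I) : Prop :=
  ∃ B : ∀ i, Matrix (I i) (I i) F, IsBasisTuple B ∧ TightSet (supp (restrictBy B t))

/-- A complete (decreasing) flag of subspaces, `W 0 = ⊤` and `dim (W j) = dim V − j`. -/
def IsCompleteFlag (F : Type*) [Field F] {V : Type*} [AddCommGroup V] [Module F V]
    (W : ℕ → Submodule F V) : Prop :=
  Antitone W ∧ W 0 = ⊤ ∧ ∀ j : ℕ, Module.finrank F (W j) = Module.finrank F V - j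

/-- Evaluation of (the multilinear map associated with) `t` at a tuple of vectors. -/
def eval {F : Type*} [Field F] {I : Fin k → Type*} [∀ i, Fintype (I i)] [∀ i, DecidableEq (I i)]
    (t : Tensor F I) (v : ∀ i, I i → F) : F :=
  ∑ α : ∀ i, I i, (∏ i, v i (α i)) * t α

/-- The support of `t` with respect to a tuple of complete flags. -/
def suppFlag {F : Type*} [Field F] {n : Fin k → ℕ} (t : Tensor F fun i => Fin (n i))
    (W : ∀ i, ℕ → Submodule F (Fin (n i) → F)) : Set (∀ i, Fin (n i)) :=
  {α | ∃ v : ∀ i, Fin (n i) → F, (∀ i, v i ∈ W i (α i : ℕ)) ∧ eval t v ≠ 0}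

section Quantum

variable {I : Fin k → Type*} [∀ i, Fintype (I i)] [∀ i, DecidableEq (I i)]

/-- Von Neumann entropy (base 2) of a Hermitian matrix. -/
def vnEntropy {d : Type*} [Fintype d] [DecidableEq d] (ρ : Matrix d d ℂ) : ℝ :=
  if h : ρ.IsHermitian then ∑ x, -(h.eigenvalues x * Real.logb 2 (h.eigenvalues x)) else 0

/-- The `j`-th marginal (reduced density matrix) of the pure state `|t⟩⟨t| / ⟨t|t⟩`. -/
def margMat (t : Tensor ℂ I) (j : Fin k) : Matrix (I j) (I j) ℂ :=
  fun a b =>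
    (∑ α : ∀ i, I i, ∑ β : ∀ i, I i,
      if α j = a ∧ β j = b ∧ (∀ i, i ≠ j → α i = β i) then t α * star (t β) else 0) /
    ∑ α : ∀ i, I i, t α * star (t α)

/-- The logarithmic lower quantum functional `E_θ` for `θ` a distribution on `[k]`. -/
def Ewq (θ : Fin k → ℝ) (t : Tensor ℂ I) : ℝ :=
  sSup {h | ∃ A : ∀ i, Matrix (I i) (I i) ℂ, IsBasisTuple A ∧
    h = ∑ j, θ j * vnEntropy (margMat (restrictBy A t) j)}

/-- The marginal (reduced density matrix) on the legs in `S` of the pure state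
`|t⟩⟨t| / ⟨t|t⟩`. -/
def margMatSet (t : Tensor ℂ I) (S : Finset (Fin k)) :
    Matrix (∀ i : {x : Fin k // x ∈ S}, I i.1) (∀ i : {x : Fin k // x ∈ S}, I i.1) ℂ :=
  fun a b =>
    (∑ α : ∀ i, I i, ∑ β : ∀ i, I i,
      if (∀ (i : Fin k) (hi : i ∈ S), α i = a ⟨i, hi⟩ ∧ β i = b ⟨i, hi⟩) ∧
         (∀ i, i ∉ S → α i = β i)
      then t α * star (t β) else 0) /
    ∑ α : ∀ i, I i, t α * star (t α)

/-- A probability distribution on the bipartitions `{S, S̄}` of `[k]` (encoded by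
choosing a representative `S` for each bipartition occurring in the support). -/
def IsBipDist (θ : Finset (Fin k) → ℝ) : Prop :=
  (∀ S, 0 ≤ θ S) ∧ (∀ S, θ S ≠ 0 → S.Nonempty ∧ Sᶜ.Nonempty) ∧
    ∑ S : Finset (Fin k), θ S = 1

/-- The logarithmic lower quantum functional `E_θ` for `θ` a distribution on bipartitions. -/
def EwqBip (θ : Finset (Fin k) → ℝ) (t : Tensor ℂ I) : ℝ :=
  sSup {h | ∃ A : ∀ i, Matrix (I i) (I i) ℂ, IsBasisTuple A ∧
    h = ∑ S : Finset (Fin k), θ S * vnEntropy (margMatSet (restrictBy A t) S)}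

/-- The lower quantum functional `F_θ`. -/
def FwqBip (θ : Finset (Fin k) → ℝ) (t : Tensor ℂ I) : ℝ :=
  if t = 0 then 0 else (2 : ℝ) ^ EwqBip θ t

/-- Degeneration: `t` lies in the closure of the `GL × ⋯ × GL`-orbit of `s`. -/
def Degen (s t : Tensor ℂ I) : Prop :=
  t ∈ closure {u : Tensor ℂ I | ∃ A : ∀ i, Matrix (I i) (I i) ℂ,
    IsBasisTuple A ∧ restrictBy A s = u}

end Quantum

/-- Trace norm of a complex matrix: `Tr √(AᴴA)`. -/
def traceNorm {d : Type*} [Fintype d] [DecidableEq d] (A : Matrix d d ℂ) : ℝ :=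
  (((Matrix.posSemidef_conjTranspose_mul_self A).1.eigenvectorUnitary : Matrix d d ℂ) *
    Matrix.diagonal (((↑) : ℝ → ℂ) ∘ (Real.sqrt ∘ (Matrix.posSemidef_conjTranspose_mul_self A).1.eigenvalues)) *
    (star (Matrix.posSemidef_conjTranspose_mul_self A).1.eigenvectorUnitary : Matrix d d ℂ)).trace.re

/-- `conjIter ρ X j = X_j ⋯ X_2 X_1 ρ X_1 X_2 ⋯ X_j`. -/
def conjIter {d : Type*} [Fintype d] (ρ : Matrix d d ℂ) {n : ℕ}
    (X : Fin n → Matrix d d ℂ) : ℕ → Matrix d d ℂ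
  | 0 => ρ
  | (j + 1) => if h : j < n then X ⟨j, h⟩ * conjIter ρ X j * X ⟨j, h⟩ else conjIter ρ X j

/-- A tricolored sum-free set in `G × G × G`. -/
def IsTriColoredSumFree {G : Type*} [AddCommGroup G] (Γ : Set (G × G × G)) : Prop :=
  (∀ a ∈ Γ, ∀ b ∈ Γ, a ≠ b → a.1 ≠ b.1 ∧ a.2.1 ≠ b.2.1 ∧ a.2.2 ≠ b.2.2) ∧
  ∀ x y z : G, (∃ a ∈ Γ, a.1 = x) → (∃ a ∈ Γ, a.2.1 = y) → (∃ a ∈ Γ, a.2.2 = z) →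
    (x + y + z = 0 ↔ (x, y, z) ∈ Γ)

/-- The maximal size `s₃(G)` of a tricolored sum-free set in `G × G × G`. -/
def s3 (G : Type*) [AddCommGroup G] : ℕ :=
  sSup {r : ℕ | ∃ Γ : Set (G × G × G), IsTriColoredSumFree Γ ∧ Γ.ncard = r}

/-- Binary entropy function (base 2), with the convention `0 · log 0 = 0`. -/
def binH (p : ℝ) : ℝ := -(p * Real.logb 2 p) - (1 - p) * Real.logb 2 (1 - p)

open Filter Topology

/-!
Let `u` witness `Ψ ⊵ Φ` and let `D` be a free diagonal of `Φ^N`. The vectors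
`(∑ j, u i (a i j))_i` for `a ∈ D` take at most `(2BN + 1)^k` values, where `B` bounds `|u|`, and
each fiber of `D` over such a vector is a free diagonal of `Ψ^N`: a point of `Ψ^N` in the box of
the fiber has the same total potential as a point of `Φ^N`, namely `0`, and as the potential is
nonnegative on every factor and positive off `Φ`, the point lies in `Φ^N`, hence in the fiber.
So `Q(Φ^N) ≤ (2BN + 1)^k Q(Ψ^N)`, and the polynomial factor disappears under `N`-th roots.
-/

section Diagonal

variable {I : Fin k → Type*}

lemma IsDiagonal.eq_of_apply_eq {D : Set (∀ i, I i)} (hD : IsDiagonal D) {a b : ∀ i, I i}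
    (ha : a ∈ D) (hb : b ∈ D) {i : Fin k} (hab : a i = b i) : a = b := by
  by_contra hne
  exact hD a ha b hb hne i hab

lemma IsFreeDiagonal.mono {D D' Φ : Set (∀ i, I i)} (hD : IsFreeDiagonal D Φ) (hD'D : D' ⊆ D)
    (hD' : D'.Nonempty) : IsFreeDiagonal D' Φ := by
  refine ⟨fun a ha b hb => hD.1 a (hD'D ha) b (hD'D hb), ?_⟩
  apply Set.Subset.antisymm
  · intro a ha
    rw [hD.2] at hD'D
    exact ⟨(hD'D ha).1, fun i => ⟨a, ha, rfl⟩⟩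
  · rintro β ⟨hβΦ, hβD'⟩
    have hβD : β ∈ D := by
      rw [hD.2]
      refine ⟨hβΦ, fun i => ?_⟩
      obtain ⟨a, ha, hai⟩ := hβD' i
      exact ⟨a, hD'D ha, hai⟩
    rcases isEmpty_or_nonempty (Fin k) with hk | ⟨⟨i⟩⟩
    · obtain ⟨a, ha⟩ := hD'
      rwa [Subsingleton.elim β a]
    · obtain ⟨a, ha, hai⟩ := hβD' i
      rwa [hD.1.eq_of_apply_eq hβD (hD'D ha) hai.symm]

lemma IsFreeDiagonal.of_superset {D Φ Ψ : Set (∀ i, I i)} (hD : IsFreeDiagonal D Φ)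
    (hΦΨ : Φ ⊆ Ψ) (hΨ : ∀ β ∈ Ψ, (∀ i, β i ∈ projSet D i) → β ∈ Φ) : IsFreeDiagonal D Ψ := by
  refine ⟨hD.1, Set.Subset.antisymm ?_ fun β hβ => ?_⟩
  · exact hD.2.trans_subset (Set.inter_subset_inter_left _ hΦΨ)
  · rw [hD.2]
    exact ⟨hΨ β hβ.1 hβ.2, hβ.2⟩

lemma ncard_le_Qset [Finite (∀ i, I i)] {D Φ : Set (∀ i, I i)} (hD : IsFreeDiagonal D Φ) :
    D.ncard ≤ Qset Φ :=
  le_csSup ⟨Nat.card (∀ i, I i), by rintro r ⟨E, -, rfl⟩; exact Set.ncard_le_card E⟩ ⟨D, hD, rfl⟩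

end Diagonal

section Degeneration

variable {I : Fin k → Type*}

/-- `CombDegen Ψ Φ` unfolds to `Φ ⊆ Ψ ∧ ∃ u, IsDegenWeight Ψ Φ u`. -/
def IsDegenWeight (Ψ Φ : Set (∀ i, I i)) (u : ∀ i, I i → ℤ) : Prop :=
  (∀ α ∈ Φ, ∑ i, u i (α i) = 0) ∧ ∀ α ∈ Ψ, α ∉ Φ → 0 < ∑ i, u i (α i)

lemma IsDegenWeight.setPow {Ψ Φ : Set (∀ i, I i)} {u : ∀ i, I i → ℤ}
    (hu : IsDegenWeight Ψ Φ u) (N : ℕ) :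
    IsDegenWeight (setPow Ψ N) (setPow Φ N) (fun i x => ∑ j, u i (x j)) := by
  refine ⟨fun α hα => ?_, fun α hαΨ hαΦ => ?_⟩ <;> rw [Finset.sum_comm]
  · exact Finset.sum_eq_zero fun j _ => hu.1 _ (hα j)
  · obtain ⟨j, hj⟩ : ∃ j, (fun i => α i j) ∉ Φ := by simpa [CVZ.setPow] using hαΦ
    have hnonneg : ∀ j, 0 ≤ ∑ i, u i (α i j) := fun j => by
      by_cases hj : (fun i => α i j) ∈ Φ
      · exact (hu.1 _ hj).ge
      · exact (hu.2 _ (hαΨ j) hj).le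
    exact Finset.sum_pos' (fun j _ => hnonneg j) ⟨j, Finset.mem_univ j, hu.2 _ (hαΨ j) hj⟩

lemma IsDegenWeight.isFreeDiagonal_fiber {Ψ Φ D : Set (∀ i, I i)} {u : ∀ i, I i → ℤ}
    (hu : IsDegenWeight Ψ Φ u) (hΦΨ : Φ ⊆ Ψ) (hD : IsFreeDiagonal D Φ) {c : Fin k → ℤ}
    (hc : {a ∈ D | ∀ i, u i (a i) = c i}.Nonempty) :
    IsFreeDiagonal {a ∈ D | ∀ i, u i (a i) = c i} Ψ := by
  refine (hD.mono (Set.sep_subset _ _) hc).of_superset hΦΨ fun β hβΨ hβ => ?_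
  obtain ⟨a, haD, hac⟩ := hc
  have hβc : ∀ i, u i (β i) = c i := fun i => by
    obtain ⟨b, ⟨-, hbc⟩, hbi⟩ := hβ i
    rw [← hbi, hbc]
  have hΦa : a ∈ Φ := by rw [hD.2] at haD; exact haD.1
  by_contra hβΦ
  have := hu.2 β hβΨ hβΦ
  simp only [hβc, ← hac, hu.1 a hΦa] at this
  exact this.false

lemma IsDegenWeight.Qset_le [∀ i, Fintype (I i)] {Ψ Φ : Set (∀ i, I i)} {u : ∀ i, I i → ℤ}
    (hu : IsDegenWeight Ψ Φ u) (hΦΨ : Φ ⊆ Ψ) {B : ℕ} (hB : ∀ i x, |u i x| ≤ B) :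
    Qset Φ ≤ (2 * B + 1) ^ k * Qset Ψ := by
  apply csSup_le'
  rintro r ⟨D, hD, rfl⟩
  set levels : Finset (Fin k → ℤ) := Fintype.piFinset fun _ => Finset.Icc (-(B : ℤ)) B
  have hmaps : ∀ a ∈ D.toFinset, (fun i => u i (a i)) ∈ levels := fun a _ => by
    simpa [levels, Fintype.mem_piFinset, ← abs_le] using fun i => hB i (a i)
  have hfiber : ∀ c ∈ levels, (D.toFinset.filter fun a => (fun i => u i (a i)) = c).card ≤
      Qset Ψ := fun c _ => by
    set E := D.toFinset.filter fun a => (fun i => u i (a i)) = c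
    have hE : (E : Set (∀ i, I i)) = {a ∈ D | ∀ i, u i (a i) = c i} := by
      ext a; simp [E, funext_iff]
    rcases E.eq_empty_or_nonempty with hE0 | hEne
    · simp [hE0]
    rw [← Set.ncard_coe_finset, hE]
    exact ncard_le_Qset (hu.isFreeDiagonal_fiber hΦΨ hD (hE ▸ Finset.coe_nonempty.mpr hEne))
  calc D.ncard = D.toFinset.card := Set.ncard_eq_toFinset_card' D
    _ = ∑ c ∈ levels, (D.toFinset.filter fun a => (fun i => u i (a i)) = c).card :=
      Finset.card_eq_sum_card_fiberwise hmaps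
    _ ≤ levels.card * Qset Ψ := Finset.sum_le_card_nsmul _ _ _ hfiber
    _ = (2 * B + 1) ^ k * Qset Ψ := by
      rw [Fintype.card_piFinset, Finset.prod_const, Finset.card_univ, Fintype.card_fin,
        Int.card_Icc]
      congr 2
      omega

lemma CombDegen.exists_Qset_setPow_le [∀ i, Fintype (I i)] {Ψ Φ : Set (∀ i, I i)}
    (h : CombDegen Ψ Φ) :
    ∃ B : ℕ, ∀ N, Qset (setPow Φ N) ≤ (2 * B * N + 1) ^ k * Qset (setPow Ψ N) := by
  obtain ⟨hΦΨ, u, hu⟩ : Φ ⊆ Ψ ∧ ∃ u, IsDegenWeight Ψ Φ u := h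
  obtain ⟨B, hB⟩ := Finite.exists_le fun x : Σ i, I i => (u x.1 x.2).natAbs
  refine ⟨B, fun N => ?_⟩
  rw [mul_assoc]
  refine (hu.setPow N).Qset_le (fun α hα j => hΦΨ (hα j)) fun i x => ?_
  calc |∑ j, u i (x j)| ≤ ∑ j, |u i (x j)| := Finset.abs_sum_le_sum_abs _ _
    _ ≤ ∑ _j : Fin N, (B : ℤ) := Finset.sum_le_sum fun j _ => by
      rw [Int.abs_eq_natAbs]; exact_mod_cast hB ⟨i, x j⟩
    _ = ((B * N : ℕ) : ℤ) := by simp [mul_comm]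

end Degeneration

lemma tendsto_mul_natCast_add_one_pow_rpow_inv {c : ℝ} (hc : 0 ≤ c) (n : ℕ) :
    Tendsto (fun N : ℕ => ((c * N + 1) ^ n) ^ (N : ℝ)⁻¹) atTop (𝓝 1) := by
  suffices h : Tendsto (fun N : ℕ => (c * N + 1) ^ (N : ℝ)⁻¹) atTop (𝓝 1) by
    simpa only [one_pow] using (h.pow n).congr fun N => Real.rpow_pow_comm (by positivity) _ _
  rcases hc.eq_or_lt with rfl | hc
  · simp
  have hlin : Tendsto (fun N : ℕ => c * N + 1) atTop atTop :=
    tendsto_atTop_add_const_right _ _ (tendsto_natCast_atTop_atTop.const_mul_atTop hc)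
  -- `tendsto_rpow_div_mul_add` at `x = c N + 1` has exponent `c / (x - 1) = 1 / N`.
  refine ((tendsto_rpow_div_mul_add c 1 (-1) one_ne_zero.symm).comp hlin).congr' ?_
  filter_upwards [eventually_ge_atTop 1] with N hN
  have hN0 : (N : ℝ) ≠ 0 := by positivity
  simp only [Function.comp_apply]
  congr 1
  field_simp
  ring

lemma le_of_tendsto_rpow_inv_of_le_mul {a b p : ℕ → ℝ} {La Lb : ℝ} (ha : ∀ N, 0 ≤ a N)
    (hb : ∀ N, 0 ≤ b N) (hp : ∀ N, 0 ≤ p N) (hab : ∀ N, a N ≤ p N * b N)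
    (hp1 : Tendsto (fun N : ℕ => p N ^ (N : ℝ)⁻¹) atTop (𝓝 1))
    (haL : Tendsto (fun N : ℕ => a N ^ (N : ℝ)⁻¹) atTop (𝓝 La))
    (hbL : Tendsto (fun N : ℕ => b N ^ (N : ℝ)⁻¹) atTop (𝓝 Lb)) : La ≤ Lb := by
  have hle : ∀ N : ℕ, a N ^ (N : ℝ)⁻¹ ≤ p N ^ (N : ℝ)⁻¹ * b N ^ (N : ℝ)⁻¹ := fun N => by
    rw [← Real.mul_rpow (hp N) (hb N)]
    exact Real.rpow_le_rpow (ha N) (hab N) (by positivity)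
  simpa using le_of_tendsto_of_tendsto' haL (hp1.mul hbL) hle

/-- combinatorial degeneration: asymptotic subrank ≥ asymptotic subrank. -/
theorem statement13 {k : ℕ} {I : Fin k → Type*} [∀ i, Fintype (I i)]
    (Φ Ψ : Set (∀ i, I i)) (h : CombDegen Ψ Φ) (LΦ LΨ : ℝ)
    (hΨ : Tendsto (fun N : ℕ => (Qset (setPow Ψ N) : ℝ) ^ ((N : ℝ)⁻¹)) atTop (𝓝 LΨ))
    (hΦ : Tendsto (fun N : ℕ => (Qset (setPow Φ N) : ℝ) ^ ((N : ℝ)⁻¹)) atTop (𝓝 LΦ)) :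
    LΦ ≤ LΨ := by
  obtain ⟨B, hB⟩ := h.exists_Qset_setPow_le
  refine le_of_tendsto_rpow_inv_of_le_mul (p := fun N : ℕ => ((2 * B * N + 1 : ℕ) : ℝ) ^ k)
    (fun _ => by positivity) (fun _ => by positivity) (fun _ => by positivity) (fun N => ?_)
    ?_ hΦ hΨ
  · exact_mod_cast hB N
  · exact_mod_cast tendsto_mul_natCast_add_one_pow_rpow_inv (by positivity : (0 : ℝ) ≤ 2 * B) k

end CVZ

end
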